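/- Let γ > 0, κ(t) = exp(−γt), and let a1, ..., a6 be real numbers such that a1,...,a6 ≥ 0, a4 + a5 − a6 ≥ 0, a1 + a2 + a3 − a4 − a5 ≥ 0 and (2/3)(2a1 + 2a2 + 2a3 + a4 + a5) ≤ 1. Define the Kraus operators K₀(t) = √(1 − (2/3)(2a1+2a2+2a3+a4+a5)(1 − κ(t)))·I₃, Kᵢ(t) = √(aᵢ(1 − κ(t)))·λᵢ for i = 1,...,6, K₇(t) = √((a4+a5−a6)(1 − κ(t)))·λ7, and K₈(t) = √((a1+a2+a3−a4−a5)(1 − κ(t)))·λ8. Then for every t ≥ 0, Σᵢ₌₀⁸ Kᵢ(t)†Kᵢ(t) = I₃, i.e. the family constitutes a trace-preserving quantum channel on 3-level systems. -/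

import Mathlib

open Matrix Complex

noncomputable section

/-- The Gell-Mann matrices. -/
def gm1 : Matrix (Fin 3) (Fin 3) ℂ := !![0, 1, 0; 1, 0, 0; 0, 0, 0]
def gm2 : Matrix (Fin 3) (Fin 3) ℂ := !![0, -I, 0; I, 0, 0; 0, 0, 0]
def gm3 : Matrix (Fin 3) (Fin 3) ℂ := !![1, 0, 0; 0, -1, 0; 0, 0, 0]
def gm4 : Matrix (Fin 3) (Fin 3) ℂ := !![0, 0, 1; 0, 0, 0; 1, 0, 0]
def gm5 : Matrix (Fin 3) (Fin 3) ℂ := !![0, 0, -I; 0, 0, 0; I, 0, 0]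
def gm6 : Matrix (Fin 3) (Fin 3) ℂ := !![0, 0, 0; 0, 0, 1; 0, 1, 0]
def gm7 : Matrix (Fin 3) (Fin 3) ℂ := !![0, 0, 0; 0, 0, -I; 0, I, 0]
def gm8 : Matrix (Fin 3) (Fin 3) ℂ :=
  ((↑(Real.sqrt 3) : ℂ))⁻¹ • !![1, 0, 0; 0, 1, 0; 0, 0, -2]

/-- The decoherence function `κ(t) = exp(-γ t)`. -/
def kappa (γ t : ℝ) : ℝ := Real.exp (-(γ * t))

/-- The Kraus operators of the six-parametric family for 3-level systems. -/
def K3_0 (γ a1 a2 a3 a4 a5 t : ℝ) : Matrix (Fin 3) (Fin 3) ℂ :=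
  (↑(Real.sqrt (1 - 2 / 3 * (2 * a1 + 2 * a2 + 2 * a3 + a4 + a5) * (1 - kappa γ t))) : ℂ)
    • (1 : Matrix (Fin 3) (Fin 3) ℂ)

def K3 (γ b t : ℝ) (g : Matrix (Fin 3) (Fin 3) ℂ) : Matrix (Fin 3) (Fin 3) ℂ :=
  (↑(Real.sqrt (b * (1 - kappa γ t))) : ℂ) • g

/-!
Every Kraus operator is a real multiple `√x • λ` of a Gell-Mann matrix (or of `I₃`), so
`K†K = x • λ†λ`, and every `λᵢ†λᵢ` is diagonal. The weights are arranged so that the terms of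
`λ₁, …, λ₈` contribute `(2/3)(2a₁ + 2a₂ + 2a₃ + a₄ + a₅)(1 - κ)` to each diagonal entry, which is
exactly what `K₀†K₀` lacks from `I₃`.
-/

lemma conjTranspose_sqrt_smul_mul_self {m n : Type*} [Fintype m] {x : ℝ} (hx : 0 ≤ x)
    (A : Matrix m n ℂ) :
    ((Real.sqrt x : ℂ) • A)ᴴ * ((Real.sqrt x : ℂ) • A) = (x : ℂ) • (Aᴴ * A) := by
  rw [conjTranspose_smul, Matrix.smul_mul, Matrix.mul_smul, smul_smul, star_def, conj_ofReal,
    ← ofReal_mul, Real.mul_self_sqrt hx]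

lemma kappa_le_one {γ t : ℝ} (hγ : 0 ≤ γ) (ht : 0 ≤ t) : kappa γ t ≤ 1 :=
  Real.exp_le_one_iff.mpr (neg_nonpos.mpr (mul_nonneg hγ ht))

lemma K3_conjTranspose_mul_self {γ b t : ℝ} (hγ : 0 ≤ γ) (ht : 0 ≤ t) (hb : 0 ≤ b)
    (g : Matrix (Fin 3) (Fin 3) ℂ) :
    (K3 γ b t g)ᴴ * K3 γ b t g = ((b * (1 - kappa γ t) : ℝ) : ℂ) • (gᴴ * g) :=
  conjTranspose_sqrt_smul_mul_self
    (mul_nonneg hb (sub_nonneg.mpr (kappa_le_one hγ ht))) g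

lemma K3_0_conjTranspose_mul_self {γ a1 a2 a3 a4 a5 t : ℝ} (hγ : 0 ≤ γ) (ht : 0 ≤ t)
    (hsum : 2 / 3 * (2 * a1 + 2 * a2 + 2 * a3 + a4 + a5) ≤ 1) :
    (K3_0 γ a1 a2 a3 a4 a5 t)ᴴ * K3_0 γ a1 a2 a3 a4 a5 t =
      ((1 - 2 / 3 * (2 * a1 + 2 * a2 + 2 * a3 + a4 + a5) * (1 - kappa γ t) : ℝ) : ℂ) • 1 := by
  have hc : 0 ≤ 1 - kappa γ t := sub_nonneg.mpr (kappa_le_one hγ ht)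
  have hκ : 0 < kappa γ t := Real.exp_pos _
  rw [K3_0, conjTranspose_sqrt_smul_mul_self, conjTranspose_one, Matrix.one_mul]
  nlinarith [mul_nonneg (sub_nonneg.mpr hsum) hc]

lemma gm1_conjTranspose_mul_self : gm1ᴴ * gm1 = diagonal ![1, 1, 0] := by
  ext i j; fin_cases i <;> fin_cases j <;> simp [gm1, mul_apply, Fin.sum_univ_three]

lemma gm2_conjTranspose_mul_self : gm2ᴴ * gm2 = diagonal ![1, 1, 0] := by
  ext i j; fin_cases i <;> fin_cases j <;> simp [gm2, mul_apply, Fin.sum_univ_three]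

lemma gm3_conjTranspose_mul_self : gm3ᴴ * gm3 = diagonal ![1, 1, 0] := by
  ext i j; fin_cases i <;> fin_cases j <;> simp [gm3, mul_apply, Fin.sum_univ_three]

lemma gm4_conjTranspose_mul_self : gm4ᴴ * gm4 = diagonal ![1, 0, 1] := by
  ext i j; fin_cases i <;> fin_cases j <;> simp [gm4, mul_apply, Fin.sum_univ_three]

lemma gm5_conjTranspose_mul_self : gm5ᴴ * gm5 = diagonal ![1, 0, 1] := by
  ext i j; fin_cases i <;> fin_cases j <;> simp [gm5, mul_apply, Fin.sum_univ_three]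

lemma gm6_conjTranspose_mul_self : gm6ᴴ * gm6 = diagonal ![0, 1, 1] := by
  ext i j; fin_cases i <;> fin_cases j <;> simp [gm6, mul_apply, Fin.sum_univ_three]

lemma gm7_conjTranspose_mul_self : gm7ᴴ * gm7 = diagonal ![0, 1, 1] := by
  ext i j; fin_cases i <;> fin_cases j <;> simp [gm7, mul_apply, Fin.sum_univ_three]

lemma gm8_conjTranspose_mul_self : gm8ᴴ * gm8 = diagonal ![1 / 3, 1 / 3, 4 / 3] := by
  have hsqrt3 : ((Real.sqrt 3 : ℂ))⁻¹ * ((Real.sqrt 3 : ℂ))⁻¹ = 3⁻¹ := by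
    rw [← mul_inv, ← ofReal_mul, Real.mul_self_sqrt (by norm_num)]
    norm_num
  ext i j
  fin_cases i <;> fin_cases j <;> simp [gm8, mul_apply, Fin.sum_univ_three, hsqrt3, map_ofNat]
  linear_combination 4 * hsqrt3

theorem kraus_family_trace_preserving_qutrit (γ a1 a2 a3 a4 a5 a6 : ℝ) (hγ : 0 < γ)
    (h1 : 0 ≤ a1) (h2 : 0 ≤ a2) (h3 : 0 ≤ a3) (h4 : 0 ≤ a4) (h5 : 0 ≤ a5) (h6 : 0 ≤ a6)
    (h7 : 0 ≤ a4 + a5 - a6) (h8 : 0 ≤ a1 + a2 + a3 - a4 - a5)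
    (hsum : 2 / 3 * (2 * a1 + 2 * a2 + 2 * a3 + a4 + a5) ≤ 1) :
    ∀ t : ℝ, 0 ≤ t →
      (K3_0 γ a1 a2 a3 a4 a5 t)ᴴ * K3_0 γ a1 a2 a3 a4 a5 t
        + (K3 γ a1 t gm1)ᴴ * K3 γ a1 t gm1
        + (K3 γ a2 t gm2)ᴴ * K3 γ a2 t gm2
        + (K3 γ a3 t gm3)ᴴ * K3 γ a3 t gm3
        + (K3 γ a4 t gm4)ᴴ * K3 γ a4 t gm4
        + (K3 γ a5 t gm5)ᴴ * K3 γ a5 t gm5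
        + (K3 γ a6 t gm6)ᴴ * K3 γ a6 t gm6
        + (K3 γ (a4 + a5 - a6) t gm7)ᴴ * K3 γ (a4 + a5 - a6) t gm7
        + (K3 γ (a1 + a2 + a3 - a4 - a5) t gm8)ᴴ * K3 γ (a1 + a2 + a3 - a4 - a5) t gm8
      = 1 := by
  intro t ht
  rw [K3_0_conjTranspose_mul_self hγ.le ht hsum, K3_conjTranspose_mul_self hγ.le ht h1,
    K3_conjTranspose_mul_self hγ.le ht h2, K3_conjTranspose_mul_self hγ.le ht h3,
    K3_conjTranspose_mul_self hγ.le ht h4, K3_conjTranspose_mul_self hγ.le ht h5,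
    K3_conjTranspose_mul_self hγ.le ht h6, K3_conjTranspose_mul_self hγ.le ht h7,
    K3_conjTranspose_mul_self hγ.le ht h8, gm1_conjTranspose_mul_self,
    gm2_conjTranspose_mul_self, gm3_conjTranspose_mul_self, gm4_conjTranspose_mul_self,
    gm5_conjTranspose_mul_self, gm6_conjTranspose_mul_self, gm7_conjTranspose_mul_self,
    gm8_conjTranspose_mul_self, ← diagonal_one]
  simp only [← diagonal_smul, diagonal_add]
  congr 1
  funext i
  fin_cases i <;> simp <;> ring

end
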